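/- Let (Σ, →) be a state transition system and ≈ an equivalence relation with the α property (σ → τ and σ → τ' imply τ ↓≈ τ') and the β property (σ → τ and σ ≈ τ' imply τ ↓≈ τ'). If → is terminating, then for all σ ≈ σ' with σ →* τ and σ' →* τ', the states τ and τ' are joinable modulo ≈. -/

import Mathlib

/-! Write `z ⇝ a` for `Comp (ReflTransGen R) E z a`: `z` reduces to a state equivalent to `a`.
By well-founded induction along `→⁺` any two `⇝`-successors of a state are joinable modulo `≈`.
If both peaks start with a step `z → u`, `z → v`, the α property joins `u` and `v`, and the
induction hypothesis at `u` and then at `v` joins each end with the other branch; the two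
resulting joins meet only up to `≈`, at states `e ≈ e'` with `e'` a reduct of `v`, and a last
appeal at `e'` absorbs that equivalence. A peak with only one step is handled the same way with
the β property in place of α. -/

def JoinableMod {S : Type*} (R : S → S → Prop) (E : S → S → Prop) (a b : S) : Prop :=
  ∃ c c', Relation.ReflTransGen R a c ∧ Relation.ReflTransGen R b c' ∧ E c c'

open Relation

section

variable {S : Type*} {R E : S → S → Prop}

namespace JoinableMod

theorem symm (hE : Equivalence E) {a b : S} (h : JoinableMod R E a b) : JoinableMod R E b a :=
  let ⟨c, c', hac, hbc', hcc'⟩ := h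
  ⟨c', c, hbc', hac, hE.symm hcc'⟩

theorem of_equiv {a b : S} (h : E a b) : JoinableMod R E a b :=
  ⟨a, b, .refl, .refl, h⟩

theorem head {a a' b b' : S} (ha : ReflTransGen R a a') (hb : ReflTransGen R b b')
    (h : JoinableMod R E a' b') : JoinableMod R E a b :=
  let ⟨c, c', hac, hbc', hcc'⟩ := h
  ⟨c, c', ha.trans hac, hb.trans hbc', hcc'⟩

end JoinableMod

def ConfluentModAt (R E : S → S → Prop) (z : S) : Prop :=
  ∀ ⦃a b⦄, Comp (ReflTransGen R) E z a → Comp (ReflTransGen R) E z b → JoinableMod R E a b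

theorem ConfluentModAt.joinableMod_of_equiv_of_step
    (hbeta : ∀ s t t', R s t → E s t' → JoinableMod R E t t') {z u a b : S}
    (hu : ConfluentModAt R E u) (hzu : R z u) (hzb : E z b) (hua : Comp (ReflTransGen R) E u a) :
    JoinableMod R E a b := by
  obtain ⟨c, c', huc, hbc', hcc'⟩ := hbeta z u b hzu hzb
  exact JoinableMod.head .refl hbc' (hu hua ⟨c, huc, hcc'⟩)

theorem joinableMod_of_step_of_step (hE : Equivalence E)
    (halpha : ∀ s t t', R s t → R s t' → JoinableMod R E t t') {z u v a b : S}
    (hzu : R z u) (hzv : R z v) (hu : ConfluentModAt R E u)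
    (hv : ∀ y, ReflTransGen R v y → ConfluentModAt R E y)
    (hua : Comp (ReflTransGen R) E u a) (hvb : Comp (ReflTransGen R) E v b) :
    JoinableMod R E a b := by
  obtain ⟨c, d, huc, hvd, hcd⟩ := halpha z u v hzu hzv
  obtain ⟨e, e', hae, hde', hee'⟩ := hu hua ⟨c, huc, hcd⟩
  obtain ⟨f, f', hbf, he'f', hff'⟩ := hv v .refl hvb ⟨e', hvd.trans hde', hE.refl e'⟩
  have he'e : Comp (ReflTransGen R) E e' e := ⟨e', .refl, hE.symm hee'⟩
  have he'f : Comp (ReflTransGen R) E e' f := ⟨f', he'f', hE.symm hff'⟩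
  exact JoinableMod.head hae hbf (hv e' (hvd.trans hde') he'e he'f)

theorem confluentModAt_of_wellFounded (hE : Equivalence E)
    (halpha : ∀ s t t', R s t → R s t' → JoinableMod R E t t')
    (hbeta : ∀ s t t', R s t → E s t' → JoinableMod R E t t')
    (hterm : WellFounded (fun a b => R b a)) (z : S) : ConfluentModAt R E z := by
  induction z using hterm.transGen.induction with
  | _ z ih =>
    have ih' : ∀ u y, R z u → ReflTransGen R u y → ConfluentModAt R E y := fun u y hzu huy =>
      ih y (transGen_swap.mpr (TransGen.head' hzu huy))
    rintro a b ⟨a', hza', ha'a⟩ ⟨b', hzb', hb'b⟩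
    rcases hza'.cases_head with rfl | ⟨u, hzu, hua'⟩ <;>
      rcases hzb'.cases_head with rfl | ⟨v, hzv, hvb'⟩
    · exact .of_equiv (hE.trans (hE.symm ha'a) hb'b)
    · exact (ConfluentModAt.joinableMod_of_equiv_of_step hbeta (ih' v v hzv .refl) hzv ha'a
        ⟨b', hvb', hb'b⟩).symm hE
    · exact ConfluentModAt.joinableMod_of_equiv_of_step hbeta (ih' u u hzu .refl) hzu hb'b
        ⟨a', hua', ha'a⟩
    · exact joinableMod_of_step_of_step hE halpha hzu hzv (ih' u u hzu .refl) (ih' v · hzv)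
        ⟨a', hua', ha'a⟩ ⟨b', hvb', hb'b⟩

end

theorem local_confluence_implies_confluence_mod {S : Type*} (R : S → S → Prop)
    (E : S → S → Prop) (hE : Equivalence E)
    (halpha : ∀ s t t', R s t → R s t' → JoinableMod R E t t')
    (hbeta : ∀ s t t', R s t → E s t' → JoinableMod R E t t')
    (hterm : WellFounded (fun a b => R b a)) :
    ∀ s s' t t', E s s' → Relation.ReflTransGen R s t →
      Relation.ReflTransGen R s' t' → JoinableMod R E t t' := by
  intro s s' t t' hss' hst hs't'
  have hconf := confluentModAt_of_wellFounded hE halpha hbeta hterm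
  obtain ⟨c, c', htc, hs'c', hcc'⟩ := hconf s ⟨t, hst, hE.refl t⟩ ⟨s, .refl, hss'⟩
  obtain ⟨d, d', ht'd, hcd', hdd'⟩ := hconf s' ⟨t', hs't', hE.refl t'⟩ ⟨c', hs'c', hE.symm hcc'⟩
  exact ⟨d', d, htc.trans hcd', ht'd, hE.symm hdd'⟩
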